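/- arXiv:math/0607451 — 3 statements merged into one kernel-verified Lean document; each statement's English description precedes it below -/
import Mathlib

section
/- For a partition λ with β-numbers β_1 > β_2 > ⋯ (with charge 0), increasing a single β-number β_i by h (when β_i + h is not already a β-number) yields the set of β-numbers of a partition μ obtained from λ by adding a rim hook of length h; conversely every way of wrapping an h-rim hook onto λ arises this way. -/
noncomputable section

/-- A partition: a weakly decreasing sequence of natural numbers with finite support.
Rows and columns are indexed from `0`. -/
structure Partition' where
  parts : ℕ → ℕ
  antitone : ∀ ⦃i j : ℕ⦄, i ≤ j → parts j ≤ parts i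
  finite_support : ∃ N, ∀ i, N ≤ i → parts i = 0

namespace Partition'

/-- The Young diagram of a partition: cells `(i, j)` with `j < λ_i` (0-indexed). -/
def cells (p : Partition') : Set (ℕ × ℕ) := {x | x.2 < p.parts x.1}

/-- The size `|λ|` of a partition. -/
def size (p : Partition') : ℕ := p.cells.ncard

/-- Two cells are adjacent if they share an edge. -/
def adjacent (a b : ℕ × ℕ) : Prop :=
  (a.1 = b.1 ∧ (a.2 + 1 = b.2 ∨ b.2 + 1 = a.2)) ∨
  (a.2 = b.2 ∧ (a.1 + 1 = b.1 ∨ b.1 + 1 = a.1))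

/-- A set of cells is (edge-)connected. -/
def ConnectedSet (S : Set (ℕ × ℕ)) : Prop :=
  ∀ a ∈ S, ∀ b ∈ S, ∃ (n : ℕ) (f : ℕ → ℕ × ℕ),
    f 0 = a ∧ f n = b ∧ (∀ k < n, adjacent (f k) (f (k + 1))) ∧ (∀ k ≤ n, f k ∈ S)

/-- A set of cells contains no 2×2 square. -/
def No2x2 (S : Set (ℕ × ℕ)) : Prop :=
  ∀ i j : ℕ, ¬ ((i, j) ∈ S ∧ (i + 1, j) ∈ S ∧ (i, j + 1) ∈ S ∧ (i + 1, j + 1) ∈ S)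

/-- `AddRimHook p q h` : the partition `q` is obtained from `p` by wrapping on
(a connected skew shape of size `h` containing no 2×2 square, i.e.) a rim hook of length `h`. -/
def AddRimHook (p q : Partition') (h : ℕ) : Prop :=
  p.cells ⊆ q.cells ∧ (q.cells \ p.cells).ncard = h ∧
    ConnectedSet (q.cells \ p.cells) ∧ No2x2 (q.cells \ p.cells)

/-- The length `λ'_j` of column `j` (0-indexed) of a partition. -/
def colLen (p : Partition') (j : ℕ) : ℕ := {i : ℕ | (i, j) ∈ p.cells}.ncard

/-- The rim hook `r^λ_x` attached to the node `x = (i,j)` of `λ`. -/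
def rimHook (p : Partition') (i j : ℕ) : Set (ℕ × ℕ) :=
  {y ∈ p.cells | i ≤ y.1 ∧ j ≤ y.2 ∧ (y.1 + 1, y.2 + 1) ∉ p.cells}

/-- The leg length of the rim hook `r^λ_{(i,j)}`. -/
def legLength (p : Partition') (i j : ℕ) : ℕ := p.colLen j - 1 - i

/-- The hook length `h^λ_{(i,j)}` of the node `(i,j) ∈ [λ]` (0-indexed). -/
def hookLen (p : Partition') (i j : ℕ) : ℕ := p.parts i + p.colLen j - i - j - 1

/-- The residue mod `e` of the foot node of a rim hook `r^λ_{(i,j)}`; the foot node is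
`(λ'_j - 1, j)` (0-indexed), so its residue is `j - λ'_j + 1 = (j+1) - λ'_j` mod `e`. -/
def footRes (e : ℕ) (p : Partition') (j : ℕ) : ZMod e :=
  (((j : ℤ) + 1 - p.colLen j : ℤ) : ZMod e)

/-- `C_f(λ)` : the number of nodes of `λ` with residue `f` mod `e`, using charge `c`
(the residue of node `(i,j)` (0-indexed) is `j - i + c` mod `e`). -/
def resCount (e : ℕ) (c : ℤ) (p : Partition') (f : ZMod e) : ℕ :=
  {x ∈ p.cells | (((x.2 : ℤ) - x.1 + c : ℤ) : ZMod e) = f}.ncard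

/-- The set of β-numbers of `p` with charge `c` : `β_i = λ_i - i + c` (1-indexed rows). -/
def betaSet (p : Partition') (c : ℤ) : Set ℤ :=
  {z | ∃ i : ℕ, z = (p.parts i : ℤ) - (i + 1) + c}

/-- The dominance order on partitions. -/
def Dominates (p q : Partition') : Prop :=
  ∀ m : ℕ, ∑ i ∈ Finset.range m, q.parts i ≤ ∑ i ∈ Finset.range m, p.parts i

end Partition'

/-!
Write `β_i = λ_i - (i + 1)`, a strictly decreasing sequence. Adding a rim hook that occupies
rows `a ≤ … ≤ c` lengthens row `a` and makes each row `i + 1` with `a ≤ i < c` end one column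
beyond row `i` of `λ`, i.e. `μ_{i+1} = λ_i + 1`. On β-numbers this says exactly that `β_c` is
deleted and a new value `β'_a` is inserted, and the sizes telescope: the hook has `β'_a - β_c`
cells. Conversely, a connected skew shape meeting rows `a` and `c` has two vertically adjacent
cells between rows `i` and `i + 1` for every `a ≤ i < c`, whence `μ_{i+1} ≥ λ_i + 1`, and the
absence of `2 × 2` squares gives `μ_{i+1} ≤ λ_i + 1`. A strictly decreasing sequence is
determined by its range, so the β-set of `μ` pins down `μ`.
-/

open Set Function Relation

theorem Finset.sum_Icc_sub_of_succ_eq {β : Type*} [AddCommGroup β] {f g : ℕ → β} {a c : ℕ}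
    (hac : a ≤ c) (hfg : ∀ i, a ≤ i → i < c → g (i + 1) = f i) :
    ∑ i ∈ Finset.Icc a c, (g i - f i) = g a - f c := by
  induction c, hac using Nat.le_induction with
  | base => simp
  | succ k hak ih =>
    rw [Finset.sum_Icc_succ_top (by omega), ih fun i hi hik => hfg i hi (by omega),
      hfg k hak (lt_add_one k)]
    abel

section Slide

variable {α : Type*} [LinearOrder α] {f g : ℕ → α} {a c : ℕ}

/-- The effect on a strictly decreasing sequence `f` of replacing its entry `f c` by a larger
value, which then sits at position `a`. -/
structure IsSlide (f g : ℕ → α) (a c : ℕ) : Prop where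
  le : a ≤ c
  lt : f a < g a
  eq_of_lt : ∀ i < a, g i = f i
  eq_of_gt : ∀ i, c < i → g i = f i
  succ_eq : ∀ i, a ≤ i → i < c → g (i + 1) = f i

theorem IsSlide.range_eq (hf : Injective f) (hs : IsSlide f g a c) :
    range g = insert (g a) (range f \ {f c}) := by
  ext z
  simp only [mem_range, mem_insert_iff, mem_sdiff, mem_singleton_iff]
  constructor
  · rintro ⟨i, rfl⟩
    rcases lt_trichotomy i a with hi | rfl | hi
    · rw [hs.eq_of_lt i hi]
      exact Or.inr ⟨⟨i, rfl⟩, hf.ne (by have := hs.le; omega)⟩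
    · exact Or.inl rfl
    · obtain ⟨k, rfl⟩ : ∃ k, i = k + 1 := ⟨i - 1, by omega⟩
      rcases lt_or_ge k c with hk | hk
      · rw [hs.succ_eq k (by omega) hk]
        exact Or.inr ⟨⟨k, rfl⟩, hf.ne hk.ne⟩
      · rw [hs.eq_of_gt _ (by omega)]
        exact Or.inr ⟨⟨_, rfl⟩, hf.ne (by omega)⟩
  · rintro (rfl | ⟨⟨i, rfl⟩, hne⟩)
    · exact ⟨a, rfl⟩
    have hic : i ≠ c := fun e => hne (congrArg f e)
    rcases lt_or_ge i a with hia | hia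
    · exact ⟨i, hs.eq_of_lt i hia⟩
    rcases hic.lt_or_gt with hic | hic
    · exact ⟨i + 1, hs.succ_eq i hia hic⟩
    · exact ⟨i, hs.eq_of_gt i hic⟩

theorem IsSlide.notMem_range (hf : StrictAnti f) (hg : StrictAnti g) (hs : IsSlide f g a c) :
    g a ∉ range f := by
  rintro ⟨i, hi⟩
  rcases lt_or_ge i a with hia | hia
  · obtain ⟨k, rfl⟩ : ∃ k, a = k + 1 := ⟨a - 1, by omega⟩
    have hlt : g (k + 1) < f k := hs.eq_of_lt k (lt_add_one k) ▸ hg (lt_add_one k)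
    exact (hf.antitone (Nat.le_of_lt_succ hia)).not_gt (hi ▸ hlt)
  · exact (hf.antitone hia).not_gt (hi ▸ hs.lt)

theorem StrictAnti.exists_isSlide (hf : StrictAnti f) {v : α} (hv : v ∉ range f) (hc : f c < v) :
    ∃ g a, StrictAnti g ∧ IsSlide f g a c ∧ g a = v := by
  classical
  have hex : ∃ i, f i < v := ⟨c, hc⟩
  set a := Nat.find hex
  have ha : f a < v := Nat.find_spec hex
  have hac : a ≤ c := Nat.find_min' hex hc
  have hbefore : ∀ i < a, v < f i := fun i hi =>
    lt_of_le_of_ne (not_lt.1 (Nat.find_min hex hi)) (fun e => hv ⟨i, e.symm⟩)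
  refine ⟨fun i => if i < a then f i else if i = a then v else if i ≤ c then f (i - 1) else f i,
    a, ?_, ⟨hac, by simpa using ha, fun i hi => by simp [hi], fun i hi => ?_,
      fun i hi hic => ?_⟩, by simp⟩
  · refine strictAnti_nat_of_succ_lt fun i => ?_
    split_ifs <;> first
      | omega
      | exact hf (by omega)
      | exact hbefore i ‹_›
      | (subst i; simpa using ha)
      | (subst i; exact (hf (lt_add_one a)).trans ha)
  · simp [show ¬ i < a by omega, show i ≠ a by omega, show ¬ i ≤ c by omega]
  · simp [show ¬ i + 1 < a by omega, show i + 1 ≠ a by omega, show i + 1 ≤ c by omega]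

end Slide

namespace Partition'

/-- Rows are indexed from `0`, so `p.beta i` is the paper's `β_{i+1}`. -/
def beta (p : Partition') (i : ℕ) : ℤ := p.parts i - (i + 1)

theorem beta_strictAnti (p : Partition') : StrictAnti p.beta :=
  strictAnti_nat_of_succ_lt fun i => by
    have := p.antitone (Nat.le_add_right i 1)
    simp only [beta]
    omega

theorem betaSet_zero (p : Partition') : p.betaSet 0 = range p.beta := by
  ext z
  simp [betaSet, beta, eq_comm]

theorem mem_cells_diff {p q : Partition'} {x : ℕ × ℕ} :
    x ∈ q.cells \ p.cells ↔ p.parts x.1 ≤ x.2 ∧ x.2 < q.parts x.1 := by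
  simp only [cells, mem_sdiff, mem_ofPred_eq, not_lt]
  exact and_comm

/-- `q` arises from `p` by adding a rim hook that occupies rows `a, …, c`. -/
structure RimHookRows (p q : Partition') (a c : ℕ) : Prop where
  le : a ≤ c
  lt : p.parts a < q.parts a
  eq_of_lt : ∀ i < a, q.parts i = p.parts i
  eq_of_gt : ∀ i, c < i → q.parts i = p.parts i
  succ_eq : ∀ i, a ≤ i → i < c → q.parts (i + 1) = p.parts i + 1

theorem isSlide_beta_iff {p q : Partition'} {a c : ℕ} :
    IsSlide p.beta q.beta a c ↔ RimHookRows p q a c := by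
  constructor
  · rintro ⟨hac, hlt, hlo, hhi, hmid⟩
    simp only [beta] at *
    refine ⟨hac, by omega, fun i hi => ?_, fun i hi => ?_, fun i hi hic => ?_⟩
    · have := hlo i hi; omega
    · have := hhi i hi; omega
    · have := hmid i hi hic; push_cast at this; omega
  · rintro ⟨hac, hlt, hlo, hhi, hmid⟩
    refine ⟨hac, ?_, fun i hi => ?_, fun i hi => ?_, fun i hi hic => ?_⟩ <;> simp only [beta]
    · omega
    · rw [hlo i hi]
    · rw [hhi i hi]
    · rw [hmid i hi hic]; push_cast; ring

def AdjacentIn (S : Set (ℕ × ℕ)) (x y : ℕ × ℕ) : Prop := x ∈ S ∧ y ∈ S ∧ adjacent x y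

theorem exists_path_of_reflTransGen {S : Set (ℕ × ℕ)} {x y : ℕ × ℕ} (hx : x ∈ S)
    (hxy : ReflTransGen (AdjacentIn S) x y) :
    ∃ (n : ℕ) (f : ℕ → ℕ × ℕ),
      f 0 = x ∧ f n = y ∧ (∀ k < n, adjacent (f k) (f (k + 1))) ∧ (∀ k ≤ n, f k ∈ S) := by
  induction hxy with
  | refl => exact ⟨0, fun _ => x, rfl, rfl, fun k hk => absurd hk k.not_lt_zero, fun _ _ => hx⟩
  | @tail y z _ hyz ih =>
    obtain ⟨n, f, hf0, hfn, hadj, hmem⟩ := ih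
    refine ⟨n + 1, fun k => if k ≤ n then f k else z, by simpa using hf0, by simp, ?_, ?_⟩
    · intro k hk
      rcases Nat.lt_or_ge k n with hkn | hkn
      · simpa [hkn.le, Nat.succ_le_of_lt hkn] using hadj k hkn
      · obtain rfl : k = n := by omega
        simpa [hfn] using hyz.2.2
    · intro k hk
      dsimp only
      split_ifs with hkn
      · exact hmem k hkn
      · exact hyz.2.1

theorem connectedSet_of_reflTransGen {S : Set (ℕ × ℕ)}
    (h : ∀ x ∈ S, ∀ y ∈ S, ReflTransGen (AdjacentIn S) x y) : ConnectedSet S :=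
  fun x hx y hy => exists_path_of_reflTransGen hx (h x hx y hy)

theorem reflTransGen_adjacentIn_row {S : Set (ℕ × ℕ)} {i lo hi : ℕ}
    (hS : ∀ k ∈ Ico lo hi, (i, k) ∈ S) {j j' : ℕ} (hj : j ∈ Ico lo hi) (hj' : j' ∈ Ico lo hi) :
    ReflTransGen (AdjacentIn S) (i, j) (i, j') := by
  refine ReflTransGen.lift (fun k => (i, k)) (fun _ _ h => h) _ _
    (reflTransGen_of_succ (fun k l => AdjacentIn S (i, k) (i, l)) ?_ ?_)
  all_goals
    intro k hk
    simp only [mem_Ico] at hj hj' hk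
    simp only [Order.succ_eq_add_one, AdjacentIn, adjacent]
    exact ⟨hS _ ⟨by omega, by omega⟩, hS _ ⟨by omega, by omega⟩, by simp⟩

theorem ConnectedSet.exists_vertical_pair {S : Set (ℕ × ℕ)} (hS : ConnectedSet S) {x y : ℕ × ℕ}
    (hx : x ∈ S) (hy : y ∈ S) {i : ℕ} (hxi : x.1 ≤ i) (hiy : i < y.1) :
    ∃ j, (i, j) ∈ S ∧ (i + 1, j) ∈ S := by
  classical
  obtain ⟨n, f, hf0, hfn, hadj, hmem⟩ := hS x hx y hy
  have hex : ∃ k, i < (f k).1 := ⟨n, hfn ▸ hiy⟩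
  -- the path leaves the rows `≤ i` for the first time at step `k + 1`
  obtain ⟨k, hk⟩ : ∃ k, Nat.find hex = k + 1 := by
    refine Nat.exists_eq_add_one.2 (Nat.pos_of_ne_zero fun h0 => ?_)
    have := Nat.find_spec hex
    rw [h0, hf0] at this
    omega
  have hbelow : (f k).1 ≤ i := not_lt.1 (Nat.find_min hex (by omega))
  have habove : i < (f (k + 1)).1 := hk ▸ Nat.find_spec hex
  have hkn : k < n := by have := Nat.find_min' hex (hfn ▸ hiy); omega
  have hstep := hadj k hkn
  refine ⟨(f k).2, ?_, ?_⟩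
  · convert hmem k hkn.le using 1
    ext <;> simp only [adjacent] at hstep <;> omega
  · convert hmem (k + 1) hkn using 1
    ext <;> simp only [adjacent] at hstep <;> omega

theorem succ_le_of_no2x2 {p q : Partition'} (h : No2x2 (q.cells \ p.cells)) (i : ℕ) :
    q.parts (i + 1) ≤ p.parts i + 1 := by
  by_contra! hlt
  have := q.antitone (Nat.le_add_right i 1)
  have := p.antitone (Nat.le_add_right i 1)
  apply h i (p.parts i)
  simp only [mem_cells_diff]
  omega

namespace RimHookRows

variable {p q : Partition'} {a c : ℕ}

theorem parts_lt (hr : RimHookRows p q a c) {i : ℕ} (hai : a ≤ i) (hic : i ≤ c) :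
    p.parts i < q.parts i := by
  rcases hai.eq_or_lt with rfl | hai
  · exact hr.lt
  obtain ⟨k, rfl⟩ : ∃ k, i = k + 1 := ⟨i - 1, by omega⟩
  have := p.antitone (Nat.le_add_right k 1)
  rw [hr.succ_eq k (by omega) (by omega)]
  omega

theorem parts_le (hr : RimHookRows p q a c) (i : ℕ) : p.parts i ≤ q.parts i := by
  rcases lt_or_ge i a with hia | hia
  · exact (hr.eq_of_lt i hia).ge
  rcases lt_or_ge c i with hci | hci
  · exact (hr.eq_of_gt i hci).ge
  exact (hr.parts_lt hia hci).le

theorem subset (hr : RimHookRows p q a c) : p.cells ⊆ q.cells :=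
  fun x hx => lt_of_lt_of_le hx (hr.parts_le x.1)

theorem mem_rows (hr : RimHookRows p q a c) {x : ℕ × ℕ} (hx : x ∈ q.cells \ p.cells) :
    a ≤ x.1 ∧ x.1 ≤ c := by
  rw [mem_cells_diff] at hx
  by_contra hout
  have : q.parts x.1 = p.parts x.1 := by
    rcases lt_or_ge x.1 a with h | h
    · exact hr.eq_of_lt _ h
    · exact hr.eq_of_gt _ (by omega)
  omega

theorem ncard_diff (hr : RimHookRows p q a c) :
    ((q.cells \ p.cells).ncard : ℤ) = q.beta a - p.beta c := by
  have hdiff : q.cells \ p.cells = ((Finset.Icc a c).sigma fun i =>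
      Finset.Ico (p.parts i) (q.parts i)).map (Equiv.sigmaEquivProd ℕ ℕ).toEmbedding := by
    ext x
    simp only [Finset.coe_map, Equiv.coe_toEmbedding, mem_image, Finset.mem_coe,
      Finset.mem_sigma, Finset.mem_Icc, Finset.mem_Ico]
    constructor
    · intro hx
      exact ⟨⟨x.1, x.2⟩, ⟨hr.mem_rows hx, mem_cells_diff.1 hx⟩, rfl⟩
    · rintro ⟨⟨i, j⟩, ⟨-, hj⟩, rfl⟩
      exact mem_cells_diff.2 hj
  rw [hdiff, ncard_coe_finset, Finset.card_map, Finset.card_sigma, Nat.cast_sum,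
    ← Finset.sum_Icc_sub_of_succ_eq (f := p.beta) hr.le]
  · refine Finset.sum_congr rfl fun i _ => ?_
    rw [Nat.card_Ico, Nat.cast_sub (hr.parts_le i)]
    simp only [beta]
    ring
  · intro i hai hic
    simp only [beta, hr.succ_eq i hai hic]
    push_cast
    ring

theorem no2x2 (hr : RimHookRows p q a c) : No2x2 (q.cells \ p.cells) := by
  rintro i j ⟨hij, hi1j, -, hi1j1⟩
  have hai := (hr.mem_rows hij).1
  have hic := (hr.mem_rows hi1j).2
  have hsucc := hr.succ_eq i hai (by simpa using hic)
  rw [mem_cells_diff] at hij hi1j1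
  simp only at hij hi1j1
  omega

theorem connectedSet (hr : RimHookRows p q a c) : ConnectedSet (q.cells \ p.cells) := by
  set S := q.cells \ p.cells
  have row : ∀ i, ∀ j ∈ Ico (p.parts i) (q.parts i), ∀ j' ∈ Ico (p.parts i) (q.parts i),
      ReflTransGen (AdjacentIn S) (i, j) (i, j') := fun i _ hj _ hj' =>
    reflTransGen_adjacentIn_row (lo := p.parts i) (hi := q.parts i)
      (fun _ hk => mem_cells_diff.2 hk) hj hj'
  -- row `k + 1` of the hook reaches column `p.parts k`, just below the first cell of row `k`
  have step : ∀ k, a ≤ k → k < c → (k, p.parts k) ∈ S ∧ (k + 1, p.parts k) ∈ S ∧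
      p.parts k ∈ Ico (p.parts (k + 1)) (q.parts (k + 1)) := fun k hak hkc => by
    have := hr.parts_lt hak hkc.le
    have := hr.succ_eq k hak hkc
    have := p.antitone (Nat.le_add_right k 1)
    simp only [S, mem_cells_diff, mem_Ico]
    omega
  have stair : ∀ i ∈ Icc a c, ∀ i' ∈ Icc a c,
      ReflTransGen (AdjacentIn S) (i, p.parts i) (i', p.parts i') := by
    intro i hi i' hi'
    simp only [mem_Icc] at hi hi'
    refine ReflTransGen.lift' (fun i => (i, p.parts i)) (fun _ _ h => h) _ _
      (reflTransGen_of_succ (fun i i' => ReflTransGen (AdjacentIn S) (i, p.parts i)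
        (i', p.parts i')) (fun k hk => ?_) (fun k hk => ?_))
    all_goals
      simp only [mem_Ico] at hk
      obtain ⟨hk, hk1, hcol⟩ := step k (by omega) (by omega)
      have hrow := hr.parts_lt (i := k + 1) (by omega) (by omega)
      simp only [Order.succ_eq_add_one]
    · exact (ReflTransGen.single ⟨hk, hk1, by simp [adjacent]⟩).trans
        (row _ _ hcol _ ⟨le_rfl, hrow⟩)
    · exact (row _ _ ⟨le_rfl, hrow⟩ _ hcol).tail ⟨hk1, hk, by simp [adjacent]⟩
  refine connectedSet_of_reflTransGen fun x hx y hy => ?_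
  have hxrow := hr.mem_rows hx
  have hyrow := hr.mem_rows hy
  rw [mem_cells_diff] at hx hy
  exact (row x.1 _ ⟨hx.1, hx.2⟩ _ ⟨le_rfl, hx.1.trans_lt hx.2⟩).trans
    ((stair _ hxrow _ hyrow).trans (row y.1 _ ⟨le_rfl, hy.1.trans_lt hy.2⟩ _ ⟨hy.1, hy.2⟩))

end RimHookRows

theorem AddRimHook.exists_rimHookRows {p q : Partition'} {h : ℕ} (hh : 0 < h)
    (hr : AddRimHook p q h) : ∃ a c, RimHookRows p q a c := by
  obtain ⟨hsub, hcard, hconn, hno2x2⟩ := hr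
  have hle : ∀ i, p.parts i ≤ q.parts i := fun i =>
    not_lt.1 fun hlt => lt_irrefl (q.parts i) (hsub (show (i, q.parts i) ∈ p.cells from hlt))
  set R := {i | p.parts i < q.parts i}
  have hne : R.Nonempty := by
    obtain ⟨x, hx⟩ := nonempty_of_ncard_ne_zero (hcard ▸ hh.ne')
    exact ⟨x.1, (mem_cells_diff.1 hx).1.trans_lt (mem_cells_diff.1 hx).2⟩
  have hbdd : BddAbove R := by
    obtain ⟨N, hN⟩ := q.finite_support
    exact ⟨N, fun i hi => not_lt.1 fun hNi => by
      have := hN i hNi.le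
      simp only [R, mem_ofPred_eq] at hi
      omega⟩
  have ha : sInf R ∈ R := Nat.sInf_mem hne
  have hc : sSup R ∈ R := Nat.sSup_mem hne hbdd
  refine ⟨sInf R, sSup R, Nat.sInf_le hc, ha, fun i hi => ?_, fun i hi => ?_, fun i hai hic => ?_⟩
  · have : i ∉ R := Nat.notMem_of_lt_sInf hi
    exact le_antisymm (not_lt.1 this) (hle i)
  · have : i ∉ R := fun hiR => (le_csSup hbdd hiR).not_gt hi
    exact le_antisymm (not_lt.1 this) (hle i)
  · have hmem : ∀ i ∈ R, (i, p.parts i) ∈ q.cells \ p.cells := fun i hi =>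
      mem_cells_diff.2 ⟨le_rfl, hi⟩
    obtain ⟨j, hij, hi1j⟩ := hconn.exists_vertical_pair (hmem _ ha) (hmem _ hc) hai hic
    have := succ_le_of_no2x2 hno2x2 i
    rw [mem_cells_diff] at hij hi1j
    simp only at hij hi1j
    omega

end Partition'

/-- Increasing a single β-number of `λ` (charge 0) by `h`, when the result is not already a
β-number, yields the β-set of a partition `μ` obtained from `λ` by adding a rim hook of
length `h`; conversely, every way of wrapping an `h`-rim hook onto `λ` arises this way. -/
theorem stmt5 (h : ℕ) (hh : 0 < h) (p q : Partition') :
    (∃ b ∈ p.betaSet 0, b + h ∉ p.betaSet 0 ∧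
        q.betaSet 0 = insert (b + h) (p.betaSet 0 \ {b}))
      ↔ Partition'.AddRimHook p q h := by
  simp only [Partition'.betaSet_zero]
  constructor
  · rintro ⟨_, ⟨c, rfl⟩, hnew, hq⟩
    obtain ⟨g, a, hg, hslide, hga⟩ :=
      p.beta_strictAnti.exists_isSlide hnew (lt_add_of_pos_right _ (by exact_mod_cast hh))
    have hrange : range q.beta = range g := by
      rw [hq, hslide.range_eq p.beta_strictAnti.injective, hga]
    have hqg : q.beta = g :=
      (StrictMono.range_inj (γ := ℤᵒᵈ) q.beta_strictAnti.dual_right hg.dual_right).1 hrange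
    subst hqg
    have hrows := Partition'.isSlide_beta_iff.1 hslide
    refine ⟨hrows.subset, ?_, hrows.connectedSet, hrows.no2x2⟩
    have := hrows.ncard_diff
    omega
  · intro hr
    obtain ⟨a, c, hrows⟩ := hr.exists_rimHookRows hh
    have hslide := Partition'.isSlide_beta_iff.2 hrows
    have hqa : q.beta a = p.beta c + h := by
      have := hrows.ncard_diff
      rw [hr.2.1] at this
      omega
    exact ⟨p.beta c, ⟨c, rfl⟩,
      hqa ▸ hslide.notMem_range p.beta_strictAnti q.beta_strictAnti,
      hqa ▸ hslide.range_eq p.beta_strictAnti.injective⟩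
end
end

section
/- Two multipartitions λ of n and μ of n (with fixed multicharge c and e finite) satisfy C_f(λ) = C_f(μ) for all f ∈ Z/eZ if and only if λ and μ have the same hub (δ_f(λ) = δ_f(μ) for all f). -/
noncomputable section

namespace Partition'

/-- Removable nodes of residue `f` (with charge `c`) of a partition. -/
def removableNodes (e : ℕ) (c : ℤ) (p : Partition') (f : ZMod e) : Set (ℕ × ℕ) :=
  {x | x ∈ p.cells ∧ x.2 + 1 = p.parts x.1 ∧ p.parts (x.1 + 1) ≤ x.2 ∧
       (((x.2 : ℤ) - x.1 + c : ℤ) : ZMod e) = f}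

/-- Addable nodes of residue `f` (with charge `c`) of a partition. -/
def addableNodes (e : ℕ) (c : ℤ) (p : Partition') (f : ZMod e) : Set (ℕ × ℕ) :=
  {x | x.2 = p.parts x.1 ∧ (x.1 = 0 ∨ x.2 < p.parts (x.1 - 1)) ∧
       (((x.2 : ℤ) - x.1 + c : ℤ) : ZMod e) = f}

/-- The hub `δ_f(λ)` of an `r`-multipartition `λ` with multicharge `c`. -/
def hub (e r : ℕ) (c : Fin r → ℤ) (lam : Fin r → Partition') (f : ZMod e) : ℤ :=
  ∑ a : Fin r, (((removableNodes e (c a) (lam a) f).ncard : ℤ)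
    - ((addableNodes e (c a) (lam a) f).ncard : ℤ))

/-- `C_f(λ)` for an `r`-multipartition `λ` with multicharge `c`. -/
def mresCount (e r : ℕ) (c : Fin r → ℤ) (lam : Fin r → Partition') (f : ZMod e) : ℕ :=
  ∑ a : Fin r, resCount e (c a) (lam a) f

/-- The size `|λ|` of an `r`-multipartition. -/
def msize (r : ℕ) (lam : Fin r → Partition') : ℕ := ∑ a : Fin r, (lam a).size

/-- Fayers' weight `Wt(λ)` of an `r`-multipartition `λ` with multicharge `c`. -/
def Wt (e r : ℕ) [NeZero e] (c : Fin r → ℤ) (lam : Fin r → Partition') : ℚ :=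
  (∑ a : Fin r, (mresCount e r c lam ((c a : ZMod e)) : ℚ))
    - (1 / 2) * ∑ f : ZMod e, ((mresCount e r c lam f : ℚ) - (mresCount e r c lam (f + 1) : ℚ)) ^ 2

end Partition'

/-!
Counting nodes row by row, the removable and addable nodes of a partition give
`δ_f = 2 C_f - C_{f+1} - C_{f-1} - [c ≡ f]`: along a row the second difference of the residue
counts telescopes to the two ends of the row, and the ends of consecutive rows pair off with the
removable and addable nodes. Hence the residue counts determine the hub. Conversely, if two
multipartitions have the same hub, the difference of their residue counts is a function on
the cycle `ℤ/eℤ` with vanishing discrete Laplacian, hence constant, and it sums to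
`|λ| - |μ| = 0`.
-/

open Finset

namespace ZMod

variable {e : ℕ} [NeZero e]

theorem eq_apply_zero_of_forall_apply_add_one {α : Type*} {d : ZMod e → α}
    (h : ∀ f, d (f + 1) = d f) (f : ZMod e) : d f = d 0 := by
  obtain ⟨k, rfl⟩ := ZMod.natCast_zmod_surjective f
  induction k with
  | zero => simp
  | succ k ih => rw [Nat.cast_succ, h, ih]

theorem eq_zero_of_forall_apply_add_one_of_sum_eq_zero {M : Type*} [AddCommGroup M]
    [IsAddTorsionFree M] {d : ZMod e → M} (h : ∀ f, d (f + 1) = d f)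
    (hsum : ∑ f, d f = 0) (f : ZMod e) : d f = 0 := by
  rw [Fintype.sum_congr _ _ (eq_apply_zero_of_forall_apply_add_one h), sum_const, card_univ,
    ZMod.card, nsmul_eq_zero_iff_right (NeZero.ne e)] at hsum
  rw [eq_apply_zero_of_forall_apply_add_one h, hsum]

theorem eq_zero_of_harmonic_of_sum_eq_zero {M : Type*} [AddCommGroup M] [IsAddTorsionFree M]
    {d : ZMod e → M} (hd : ∀ f, d (f + 1) + d (f - 1) = 2 • d f)
    (hsum : ∑ f, d f = 0) (f : ZMod e) : d f = 0 := by
  -- The difference `d (f + 1) - d f` is invariant under translation and sums to zero.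
  have hdiff : ∀ f, d (f + 1) - d f = 0 := by
    refine eq_zero_of_forall_apply_add_one_of_sum_eq_zero (fun f => ?_) ?_
    · have := hd (f + 1)
      rw [add_sub_cancel_right, two_nsmul] at this
      rw [sub_eq_sub_iff_add_eq_add, this]
    · rw [sum_sub_distrib, sub_eq_zero]
      exact Fintype.sum_equiv (Equiv.addRight 1) _ _ fun _ => rfl
  exact eq_zero_of_forall_apply_add_one_of_sum_eq_zero (fun f => sub_eq_zero.mp (hdiff f)) hsum f

end ZMod

theorem Finset.sum_range_second_diff (φ : ℤ → ℤ) (a : ℤ) (m : ℕ) :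
    ∑ j ∈ range m, (2 * φ (j + a) - φ (j + a - 1) - φ (j + a + 1))
      = (φ (m + a - 1) - φ (m + a)) - (φ (a - 1) - φ a) := by
  have := sum_range_sub (fun j : ℕ => φ (j + a - 1) - φ (j + a)) m
  simp only [Nat.cast_zero, zero_add] at this
  rw [← this]
  refine sum_congr rfl fun j _ => ?_
  rw [Nat.cast_succ, show (j : ℤ) + 1 + a - 1 = j + a by ring, add_right_comm]
  ring

theorem ncard_eq_sum_of_mem_iff_graph {M : ℕ} {S : Set (ℕ × ℕ)} (T : ℕ → Prop)
    [DecidablePred T] (g : ℕ → ℕ) (hS : ∀ i j, (i, j) ∈ S ↔ T i ∧ j = g i)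
    (hT : ∀ i, T i → i < M) :
    S.ncard = ∑ i ∈ range M, if T i then 1 else 0 := by
  have hgraph : S = ↑({i ∈ range M | T i}.image fun i => (i, g i)) := by
    ext ⟨i, j⟩
    simp only [hS, coe_image, coe_filter, mem_range, Set.mem_image, Prod.mk.injEq]
    grind
  rw [hgraph, Set.ncard_coe_finset, card_image_of_injective _ fun _ _ h => (Prod.mk.inj h).1,
    card_filter]

namespace Partition'

def resIndicator (e : ℕ) (f : ZMod e) (z : ℤ) : ℤ := if (z : ZMod e) = f then 1 else 0

theorem resIndicator_add_one (e : ℕ) (f : ZMod e) (z : ℤ) :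
    resIndicator e (f + 1) z = resIndicator e f (z - 1) := by
  simp only [resIndicator, Int.cast_sub, Int.cast_one, sub_eq_iff_eq_add]

theorem resIndicator_sub_one (e : ℕ) (f : ZMod e) (z : ℤ) :
    resIndicator e (f - 1) z = resIndicator e f (z + 1) := by
  simp only [resIndicator, Int.cast_add, Int.cast_one, eq_sub_iff_add_eq]

theorem sum_resIndicator (e : ℕ) [NeZero e] (z : ℤ) :
    ∑ f : ZMod e, resIndicator e f z = 1 := by
  simp [resIndicator]

section

variable (p : Partition') {M : ℕ}

theorem ncard_setOf_cells (P : ℕ × ℕ → Prop) [DecidablePred P]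
    (hM : ∀ i, M ≤ i → p.parts i = 0) :
    {x ∈ p.cells | P x}.ncard = ∑ i ∈ range M, #{j ∈ range (p.parts i) | P (i, j)} := by
  have hcells : {x ∈ p.cells | P x}
      = ↑{x ∈ range M ×ˢ range (p.parts 0) | x.2 < p.parts x.1 ∧ P x} := by
    ext ⟨i, j⟩
    simp only [cells, Set.mem_ofPred_eq, coe_filter, mem_product, mem_range]
    have := p.antitone (Nat.zero_le i)
    have := hM i
    grind
  rw [hcells, Set.ncard_coe_finset, card_filter, sum_product]
  refine sum_congr rfl fun i _ => ?_
  have hrow : {j ∈ range (p.parts 0) | j < p.parts i} = range (p.parts i) := by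
    ext j
    have := p.antitone (Nat.zero_le i)
    simp only [mem_filter, mem_range]
    omega
  rw [card_filter, ← hrow, sum_filter]
  simp only [ite_and]

theorem size_eq_sum_parts (hM : ∀ i, M ≤ i → p.parts i = 0) :
    p.size = ∑ i ∈ range M, p.parts i := by
  simpa [size] using p.ncard_setOf_cells (fun _ => True) hM

theorem resCount_eq_sum (e : ℕ) (c : ℤ) (f : ZMod e) (hM : ∀ i, M ≤ i → p.parts i = 0) :
    (resCount e c p f : ℤ)
      = ∑ i ∈ range M, ∑ j ∈ range (p.parts i), resIndicator e f (j + (c - i)) := by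
  rw [resCount, p.ncard_setOf_cells _ hM]
  push_cast [card_filter]
  refine sum_congr rfl fun i _ => sum_congr rfl fun j _ => ?_
  rw [resIndicator, show (j : ℤ) + (c - i) = j - i + c by ring]
  push_cast
  rfl

theorem sum_resCount (e : ℕ) [NeZero e] (c : ℤ) :
    ∑ f : ZMod e, resCount e c p f = p.size := by
  obtain ⟨M, hM⟩ := p.finite_support
  zify
  simp only [p.resCount_eq_sum e c _ hM, p.size_eq_sum_parts hM]
  rw [sum_comm]
  push_cast
  refine sum_congr rfl fun i _ => ?_
  rw [sum_comm]
  simp [sum_resIndicator]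

end

section

variable (e : ℕ) (c : ℤ) (p : Partition') (f : ZMod e) {M : ℕ}

theorem ncard_removableNodes (hM : ∀ i, M ≤ i → p.parts i = 0) :
    ((removableNodes e c p f).ncard : ℤ) = ∑ i ∈ range M,
      if p.parts (i + 1) < p.parts i then resIndicator e f (p.parts i + (c - i) - 1) else 0 := by
  rw [ncard_eq_sum_of_mem_iff_graph (M := M) (fun i => p.parts (i + 1) < p.parts i ∧
      ((p.parts i + (c - i) - 1 : ℤ) : ZMod e) = f) (fun i => p.parts i - 1)]
  · simp only [Nat.cast_sum, Nat.cast_ite, Nat.cast_one, Nat.cast_zero, ite_and, resIndicator]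
  · intro i j
    simp only [removableNodes, cells, Set.mem_ofPred_eq]
    constructor
    · rintro ⟨-, hj, hle, hres⟩
      refine ⟨⟨by omega, ?_⟩, by omega⟩
      rwa [show (p.parts i : ℤ) + (c - i) - 1 = j - i + c by omega]
    · rintro ⟨⟨hlt, hres⟩, rfl⟩
      refine ⟨by omega, by omega, by omega, ?_⟩
      rwa [show ((p.parts i - 1 : ℕ) : ℤ) - i + c = p.parts i + (c - i) - 1 by omega]
  · intro i hi
    by_contra hiM
    have := hM i (by omega)
    omega

theorem ncard_addableNodes (hM : ∀ i, M ≤ i → p.parts i = 0) :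
    ((addableNodes e c p f).ncard : ℤ) = resIndicator e f (p.parts 0 + c) + ∑ i ∈ range M,
      if p.parts (i + 1) < p.parts i then resIndicator e f (p.parts (i + 1) + (c - (i + 1)))
      else 0 := by
  rw [ncard_eq_sum_of_mem_iff_graph (M := M + 1)
    (fun i => (i = 0 ∨ p.parts i < p.parts (i - 1)) ∧
      ((p.parts i + (c - i) : ℤ) : ZMod e) = f) p.parts]
  · simp only [Nat.cast_sum, Nat.cast_ite, Nat.cast_one, Nat.cast_zero, ite_and, resIndicator]
    rw [sum_range_succ', add_comm]
    simp
  · intro i j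
    simp only [addableNodes, Set.mem_ofPred_eq, add_sub_left_comm _ c, add_comm c,
      sub_add_eq_add_sub]
    constructor
    · rintro ⟨rfl, hi, hres⟩
      exact ⟨⟨hi, hres⟩, rfl⟩
    · rintro ⟨⟨hi, hres⟩, rfl⟩
      exact ⟨rfl, hi, hres⟩
  · intro i hi
    by_contra hiM
    have := hM i (by omega)
    have := hM (i - 1) (by omega)
    omega

theorem two_mul_resCount_sub_resCount_sub_resCount (hM : ∀ i, M ≤ i → p.parts i = 0) :
    2 * (resCount e c p f : ℤ) - resCount e c p (f + 1) - resCount e c p (f - 1)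
      = ∑ i ∈ range M,
          ((resIndicator e f (p.parts i + (c - i) - 1) - resIndicator e f (p.parts i + (c - i)))
            - (resIndicator e f (c - i - 1) - resIndicator e f (c - i))) := by
  simp only [resCount_eq_sum _ _ _ _ hM, resIndicator_add_one, resIndicator_sub_one, mul_sum,
    ← sum_sub_distrib]
  refine sum_congr rfl fun i _ => ?_
  rw [← sum_range_second_diff]

theorem ncard_removableNodes_sub_ncard_addableNodes :
    ((removableNodes e c p f).ncard : ℤ) - (addableNodes e c p f).ncard
      = 2 * resCount e c p f - resCount e c p (f + 1) - resCount e c p (f - 1)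
        - resIndicator e f c := by
  obtain ⟨M, hM⟩ := p.finite_support
  rw [ncard_removableNodes e c p f hM, ncard_addableNodes e c p f hM,
    two_mul_resCount_sub_resCount_sub_resCount e c p f hM]
  set χ := resIndicator e f
  -- Rows of equal length contribute neither a removable nor an addable node, but then the two
  -- residues below coincide anyway.
  have hpair : ∀ i,
      ((if p.parts (i + 1) < p.parts i then χ (p.parts i + (c - i) - 1) else 0)
        - if p.parts (i + 1) < p.parts i then χ (p.parts (i + 1) + (c - (i + 1))) else 0)
      = χ (p.parts i + (c - i) - 1) - χ (p.parts (i + 1) + (c - (i + 1))) := by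
    intro i
    split_ifs with h
    · rfl
    · have : p.parts (i + 1) = p.parts i := le_antisymm (p.antitone i.le_succ) (not_lt.mp h)
      rw [this, show (p.parts i : ℤ) + (c - (i + 1)) = p.parts i + (c - i) - 1 by ring, sub_self,
        sub_self]
  have htel := sum_range_sub (fun i => χ (p.parts i + (c - i)) - χ (c - i)) M
  simp only [hM M le_rfl, Nat.cast_zero, zero_add, sub_zero, sub_self, Nat.cast_succ] at htel
  have hsum := sum_sub_distrib (s := range M)
    (fun i => if p.parts (i + 1) < p.parts i then χ (p.parts i + (c - i) - 1) else 0)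
    (fun i => if p.parts (i + 1) < p.parts i then χ (p.parts (i + 1) + (c - (i + 1))) else 0)
  simp only [hpair] at hsum
  have hrearrange :
      ∑ i ∈ range M, (χ (p.parts i + (c - i) - 1) - χ (p.parts (i + 1) + (c - (i + 1))))
        = ∑ i ∈ range M, ((χ (p.parts i + (c - i) - 1) - χ (p.parts i + (c - i)))
          - (χ (c - i - 1) - χ (c - i)))
        - ∑ i ∈ range M, (χ (p.parts (i + 1) + (c - (i + 1))) - χ (c - (i + 1))
          - (χ (p.parts i + (c - i)) - χ (c - i))) := by
    rw [← sum_sub_distrib]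
    refine sum_congr rfl fun i _ => ?_
    rw [show c - i - 1 = c - (i + 1) by ring]
    ring
  linarith

end

section

variable (e r : ℕ) (c : Fin r → ℤ) (lam : Fin r → Partition')

theorem hub_eq (f : ZMod e) :
    hub e r c lam f = 2 * mresCount e r c lam f - mresCount e r c lam (f + 1)
      - mresCount e r c lam (f - 1) - ∑ a, resIndicator e f (c a) := by
  simp only [hub, mresCount, ncard_removableNodes_sub_ncard_addableNodes, Nat.cast_sum, mul_sum,
    ← sum_sub_distrib]

theorem sum_mresCount [NeZero e] : ∑ f : ZMod e, mresCount e r c lam f = msize r lam := by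
  simp only [mresCount, msize]
  rw [sum_comm]
  exact sum_congr rfl fun a _ => sum_resCount (lam a) e (c a)

end

end Partition'

/-- Two multipartitions of `n` have the same residue counts `C_f` for all `f ∈ ℤ/eℤ` if and
only if they have the same hub. -/
theorem stmt14 (e r n : ℕ) (he : 2 ≤ e) (c : Fin r → ℤ) (lam mu : Fin r → Partition')
    (h1 : Partition'.msize r lam = n) (h2 : Partition'.msize r mu = n) :
    (∀ f : ZMod e, Partition'.mresCount e r c lam f = Partition'.mresCount e r c mu f)
      ↔ (∀ f : ZMod e, Partition'.hub e r c lam f = Partition'.hub e r c mu f) := by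
  have : NeZero e := ⟨by omega⟩
  refine ⟨fun h f => by simp only [Partition'.hub_eq, h], fun h f => ?_⟩
  let d : ZMod e → ℤ := fun f =>
    (Partition'.mresCount e r c lam f : ℤ) - Partition'.mresCount e r c mu f
  have hd : ∀ f, d (f + 1) + d (f - 1) = 2 • d f := by
    intro f
    have := h f
    simp only [Partition'.hub_eq] at this
    simp only [d, two_nsmul]
    linarith
  have hsum : ∑ f, d f = 0 := by
    rw [sum_sub_distrib, sub_eq_zero]
    exact_mod_cast (Partition'.sum_mresCount e r c lam).trans (h1.trans h2.symm) |>.trans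
      (Partition'.sum_mresCount e r c mu).symm
  have := ZMod.eq_zero_of_harmonic_of_sum_eq_zero hd hsum f
  simp only [d, sub_eq_zero] at this
  exact_mod_cast this
end
end

section
/- If a multipartition μ is obtained from a multipartition λ by wrapping on a single e-rim hook (onto any component), then Wt(μ) = Wt(λ) + r. -/
noncomputable section

/-!
Contents `j - i` of the nodes of a rim hook are pairwise distinct (two nodes of equal content
would force a 2×2 square into the skew shape) and form an interval of integers (the hook is
connected, and a step between adjacent nodes changes the content by one). A rim hook of length
`e` therefore has exactly one node of each residue mod `e`, so wrapping it on raises every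
`C_f` by one. In `Wt` the differences `C_f - C_{f+1}` are unchanged, while each of the `r` terms
`C_{c_a}` grows by one.
-/

lemma exists_eq_of_le_of_le_of_step_le_one (f : ℕ → ℤ) (t : ℤ) (n : ℕ)
    (hstep : ∀ k < n, f (k + 1) ≤ f k + 1) (h0 : f 0 ≤ t) (hn : t ≤ f n) :
    ∃ k ≤ n, f k = t := by
  induction n with
  | zero => exact ⟨0, le_rfl, le_antisymm h0 hn⟩
  | succ n ih =>
    by_cases ht : t ≤ f n
    · obtain ⟨k, hk, hfk⟩ := ih (fun k hk => hstep k (by omega)) ht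
      exact ⟨k, by omega, hfk⟩
    · have := hstep n n.lt_succ_self
      exact ⟨n + 1, le_rfl, by omega⟩

lemma ZMod.intCast_injOn_of_ordConnected {e : ℕ} {S : Set ℤ} (hS : S.OrdConnected)
    (hfin : S.Finite) (hcard : S.ncard ≤ e) : S.InjOn (Int.cast : ℤ → ZMod e) := by
  intro x hx y hy hxy
  wlog hle : x ≤ y generalizing x y
  · exact (this hy hx hxy.symm (by omega)).symm
  have hIcc : (y + 1 - x).toNat ≤ e := by
    rw [← Int.card_Icc, ← Set.ncard_coe_finset, Finset.coe_Icc]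
    exact (Set.ncard_le_ncard (hS.out hx hy) hfin).trans hcard
  have hdvd : (e : ℤ) ∣ y - x :=
    (ZMod.intCast_eq_intCast_iff_dvd_sub x y e).mp hxy
  have := Int.eq_zero_of_dvd_of_nonneg_of_lt (by omega) (by omega) hdvd
  omega

namespace Partition'

lemma cells_finite (p : Partition') : p.cells.Finite := by
  obtain ⟨N, hN⟩ := p.finite_support
  refine ((Set.finite_Iio N).prod (Set.finite_Iio (p.parts 0))).subset ?_
  rintro ⟨i, j⟩ (hij : j < p.parts i)
  refine ⟨Set.mem_Iio.mpr ?_, hij.trans_le (p.antitone i.zero_le)⟩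
  by_contra! hi
  rw [hN i hi] at hij
  omega

def content (x : ℕ × ℕ) : ℤ := (x.2 : ℤ) - x.1

def residue (e : ℕ) (c : ℤ) (x : ℕ × ℕ) : ZMod e := ((content x + c : ℤ) : ZMod e)

lemma resCount_eq_ncard (e : ℕ) (c : ℤ) (p : Partition') (f : ZMod e) :
    resCount e c p f = {x ∈ p.cells | residue e c x = f}.ncard := rfl

lemma content_le_add_one_of_adjacent {a b : ℕ × ℕ} (h : adjacent a b) :
    content b ≤ content a + 1 := by
  unfold content
  rcases h with ⟨_, _ | _⟩ | ⟨_, _ | _⟩ <;> omega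

lemma ConnectedSet.ordConnected_image_content {S : Set (ℕ × ℕ)} (hS : ConnectedSet S) :
    (content '' S).OrdConnected := by
  refine ⟨?_⟩
  rintro _ ⟨x, hx, rfl⟩ _ ⟨y, hy, rfl⟩ t ⟨hxt, hty⟩
  obtain ⟨n, g, rfl, rfl, hadj, hmem⟩ := hS x hx y hy
  obtain ⟨k, hk, rfl⟩ := exists_eq_of_le_of_le_of_step_le_one (content ∘ g) t n
    (fun k hk => content_le_add_one_of_adjacent (hadj k hk)) hxt hty
  exact ⟨g k, hmem k hk, rfl⟩

section SkewShape

variable {p q : Partition'}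

lemma No2x2.injOn_content (hno : No2x2 (q.cells \ p.cells)) :
    (q.cells \ p.cells).InjOn content := by
  -- Nodes `(i, j)` and `(i + d, j + d)` of `q \ p` with `d > 0` would put the whole square
  -- at `(i, j)` into `q \ p`, since rows of `p` and `q` are weakly decreasing.
  have no_diag : ∀ {i j d : ℕ}, 0 < d → (i, j) ∈ q.cells \ p.cells →
      (i + d, j + d) ∉ q.cells \ p.cells := by
    rintro i j d hd ⟨hq, hp⟩ ⟨hq', -⟩
    have := q.antitone (show i + 1 ≤ i + d by omega)
    have := q.antitone (show i ≤ i + 1 by omega)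
    have := p.antitone (show i ≤ i + 1 by omega)
    apply hno i j
    simp only [Set.mem_sdiff, cells, Set.mem_ofPred_eq] at hq hp hq' ⊢
    omega
  rintro ⟨i, j⟩ hx ⟨i', j'⟩ hy hct
  simp only [content] at hct
  rcases lt_trichotomy i i' with h | rfl | h
  · have hy' : (i + (i' - i), j + (i' - i)) = (i', j') := by ext <;> dsimp only <;> omega
    exact (no_diag (by omega) hx (hy' ▸ hy)).elim
  · simp only [Prod.mk.injEq, true_and]
    omega
  · have hx' : (i' + (i - i'), j' + (i - i')) = (i, j) := by ext <;> dsimp only <;> omega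
    exact (no_diag (by omega) hy (hx' ▸ hx)).elim

lemma AddRimHook.injOn_residue {n e : ℕ} (h : AddRimHook p q n) (hn : n ≤ e) (c : ℤ) :
    (q.cells \ p.cells).InjOn (residue e c) := by
  obtain ⟨-, hcard, hconn, hno⟩ := h
  have hfin : (q.cells \ p.cells).Finite := q.cells_finite.subset Set.sdiff_subset
  have hcast : (content '' (q.cells \ p.cells)).InjOn (Int.cast : ℤ → ZMod e) :=
    ZMod.intCast_injOn_of_ordConnected hconn.ordConnected_image_content (hfin.image _)
      ((Set.ncard_image_le hfin).trans (hcard.trans_le hn))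
  intro x hx y hy hxy
  refine hno.injOn_content hx hy (hcast ⟨x, hx, rfl⟩ ⟨y, hy, rfl⟩ ?_)
  simpa only [residue, Int.cast_add, add_left_inj] using hxy

lemma AddRimHook.bijOn_residue {e : ℕ} [NeZero e] (h : AddRimHook p q e) (c : ℤ) :
    Set.BijOn (residue e c) (q.cells \ p.cells) Set.univ := by
  have hinj := h.injOn_residue le_rfl c
  refine ⟨Set.mapsTo_univ _ _, hinj, ?_⟩
  rw [Set.SurjOn, Set.univ_subset_iff]
  refine Set.eq_of_subset_of_ncard_le (Set.subset_univ _) ?_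
  rw [Set.ncard_univ, Nat.card_zmod, hinj.ncard_image, h.2.1]

lemma AddRimHook.resCount_eq_add_one {e : ℕ} [NeZero e] (h : AddRimHook p q e) (c : ℤ)
    (f : ZMod e) : resCount e c q f = resCount e c p f + 1 := by
  have hbij := h.bijOn_residue c
  obtain ⟨x, ⟨hxq, hxp⟩, hx⟩ := hbij.surjOn (Set.mem_univ f)
  have hsplit :
      {y ∈ q.cells | residue e c y = f} = insert x {y ∈ p.cells | residue e c y = f} := by
    ext y
    simp only [Set.mem_insert_iff, Set.mem_sep_iff]
    constructor
    · rintro ⟨hyq, hy⟩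
      by_cases hyp : y ∈ p.cells
      · exact Or.inr ⟨hyp, hy⟩
      · exact Or.inl (hbij.injOn ⟨hyq, hyp⟩ ⟨hxq, hxp⟩ (hy.trans hx.symm))
    · rintro (rfl | ⟨hyp, hy⟩)
      · exact ⟨hxq, hx⟩
      · exact ⟨h.1 hyp, hy⟩
  rw [resCount_eq_ncard, resCount_eq_ncard, hsplit,
    Set.ncard_insert_of_notMem (fun hx' => hxp hx'.1) (p.cells_finite.subset (Set.sep_subset _ _))]

end SkewShape

lemma mresCount_eq_add_one_of_addRimHook {e r : ℕ} [NeZero e] (c : Fin r → ℤ)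
    {lam mu : Fin r → Partition'} {b : Fin r} (hother : ∀ a, a ≠ b → mu a = lam a)
    (hb : AddRimHook (lam b) (mu b) e) (f : ZMod e) :
    mresCount e r c mu f = mresCount e r c lam f + 1 := by
  unfold mresCount
  rw [← Finset.add_sum_erase _ _ (Finset.mem_univ b),
    ← Finset.add_sum_erase _ _ (Finset.mem_univ b), hb.resCount_eq_add_one, add_right_comm]
  congr 2
  refine Finset.sum_congr rfl fun a ha => ?_
  rw [hother a (Finset.ne_of_mem_erase ha)]

lemma Wt_eq_add_of_mresCount_eq_add_one {e r : ℕ} [NeZero e] (c : Fin r → ℤ)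
    {lam mu : Fin r → Partition'} (h : ∀ f, mresCount e r c mu f = mresCount e r c lam f + 1) :
    Wt e r c mu = Wt e r c lam + r := by
  simp only [Wt, h, Nat.cast_succ, add_sub_add_right_eq_sub, Finset.sum_add_distrib,
    Finset.sum_const, Finset.card_univ, Fintype.card_fin, nsmul_eq_mul, mul_one]
  ring

end Partition'

theorem stmt16_general (e r : ℕ) [NeZero e] (c : Fin r → ℤ)
    (lam mu : Fin r → Partition') (b : Fin r)
    (hother : ∀ a, a ≠ b → mu a = lam a)
    (hb : Partition'.AddRimHook (lam b) (mu b) e) :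
    Partition'.Wt e r c mu = Partition'.Wt e r c lam + r :=
  Partition'.Wt_eq_add_of_mresCount_eq_add_one c
    (Partition'.mresCount_eq_add_one_of_addRimHook c hother hb)

/-- If a multipartition `μ` is obtained from `λ` by wrapping on a single `e`-rim hook
(onto any component), then `Wt(μ) = Wt(λ) + r`. -/
theorem stmt16 (e r : ℕ) [NeZero e] (he : 2 ≤ e) (c : Fin r → ℤ)
    (lam mu : Fin r → Partition') (b : Fin r)
    (hother : ∀ a, a ≠ b → mu a = lam a)
    (hb : Partition'.AddRimHook (lam b) (mu b) e) :
    Partition'.Wt e r c mu = Partition'.Wt e r c lam + r :=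
  stmt16_general e r c lam mu b hother hb
end
end
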